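/- Let U : ℝ → ℝ be a C² solution of -c U' = (1/2) U'' + f(U) with U(-∞)=1, U(+∞)=0, U'(±∞)=0, U' square integrable and not identically zero. If ∫_0^1 f(z) dz > 0 then c > 0, if ∫_0^1 f(z) dz < 0 then c < 0, and if ∫_0^1 f(z) dz = 0 then c = 0. -/

import Mathlib

/-!
Multiplying the equation by `U'` shows that the energy `E = U'²/4 + F(U)`, with `F` a primitive
of `f`, satisfies `E' = -c U'²`. Integrating over `ℝ`, and using that `E` tends to `F(1)` at `-∞` and
to `F(0)` at `+∞`, gives `c ∫ U'² = ∫₀¹ f`; since `∫ U'² > 0`, the sign of `c` is that of `∫₀¹ f`.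
-/

open MeasureTheory Filter Topology

noncomputable def travelingWaveEnergy (U f : ℝ → ℝ) (x : ℝ) : ℝ :=
  deriv U x ^ 2 / 4 + ∫ t in (0:ℝ)..U x, f t

section TravelingWave

variable {U f : ℝ → ℝ} {c : ℝ}

theorem hasDerivAt_travelingWaveEnergy (hU : Differentiable ℝ U)
    (hU' : Differentiable ℝ (deriv U)) (hf : Continuous f)
    (heq : ∀ x, -c * deriv U x = (1/2) * deriv (deriv U) x + f (U x)) (x : ℝ) :
    HasDerivAt (travelingWaveEnergy U f) (-c * deriv U x ^ 2) x := by
  have hF : HasDerivAt (fun y => ∫ t in (0:ℝ)..y, f t) (f (U x)) (U x) :=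
    hf.integral_hasStrictDerivAt 0 (U x) |>.hasDerivAt
  have := (((hU' x).hasDerivAt.pow 2).div_const 4).add (hF.comp x (hU x).hasDerivAt)
  refine this.congr_deriv ?_
  linear_combination (-deriv U x) * heq x

theorem tendsto_travelingWaveEnergy {l : Filter ℝ} {a : ℝ} (hf : Continuous f)
    (hU : Tendsto U l (𝓝 a)) (hU' : Tendsto (deriv U) l (𝓝 0)) :
    Tendsto (travelingWaveEnergy U f) l (𝓝 (∫ t in (0:ℝ)..a, f t)) := by
  have hF : Continuous fun y => ∫ t in (0:ℝ)..y, f t :=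
    intervalIntegral.continuous_primitive (fun _ _ => hf.intervalIntegrable _ _) 0
  have := ((hU'.pow 2).div_const 4).add ((hF.tendsto a).comp hU)
  rwa [zero_pow two_ne_zero, zero_div, zero_add] at this

theorem speed_mul_integral_sq_deriv_eq (hU : Differentiable ℝ U)
    (hU' : Differentiable ℝ (deriv U)) (hf : Continuous f)
    (heq : ∀ x, -c * deriv U x = (1/2) * deriv (deriv U) x + f (U x))
    (hUbot : Tendsto U atBot (𝓝 1)) (hUtop : Tendsto U atTop (𝓝 0))
    (hU'bot : Tendsto (deriv U) atBot (𝓝 0)) (hU'top : Tendsto (deriv U) atTop (𝓝 0))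
    (hL2 : Integrable (fun x => deriv U x ^ 2)) :
    c * ∫ x, deriv U x ^ 2 = ∫ z in (0:ℝ)..1, f z := by
  have h := integral_of_hasDerivAt_of_tendsto (hasDerivAt_travelingWaveEnergy hU hU' hf heq)
    (hL2.const_mul (-c)) (tendsto_travelingWaveEnergy hf hUbot hU'bot)
    (tendsto_travelingWaveEnergy hf hUtop hU'top)
  rw [integral_const_mul] at h
  simpa using h

end TravelingWave

theorem traveling_wave_speed_sign_general
    (U f : ℝ → ℝ) (c : ℝ)
    (hU : ContDiff ℝ 2 U)
    (hf : Continuous f)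
    (heq : ∀ x, -c * deriv U x = (1/2) * deriv (deriv U) x + f (U x))
    (hUbot : Tendsto U atBot (nhds 1))
    (hUtop : Tendsto U atTop (nhds 0))
    (hU'bot : Tendsto (deriv U) atBot (nhds 0))
    (hU'top : Tendsto (deriv U) atTop (nhds 0))
    (hL2 : Integrable (fun x => (deriv U x) ^ 2))
    (hnz : ∃ x, deriv U x ≠ 0) :
    ((0 < ∫ z in (0:ℝ)..1, f z) → 0 < c) ∧
    ((∫ z in (0:ℝ)..1, f z) < 0 → c < 0) ∧
    ((∫ z in (0:ℝ)..1, f z) = 0 → c = 0) := by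
  obtain ⟨x₀, hx₀⟩ := hnz
  have hJ : 0 < ∫ x, deriv U x ^ 2 :=
    integral_pos_of_integrable_nonneg_nonzero (x := x₀) ((hU.continuous_deriv one_le_two).pow 2)
      hL2 (fun x => sq_nonneg _) (pow_ne_zero 2 hx₀)
  have hc : c = (∫ z in (0:ℝ)..1, f z) / ∫ x, deriv U x ^ 2 := by
    rw [← speed_mul_integral_sq_deriv_eq (hU.differentiable two_ne_zero)
      hU.differentiable_deriv_two hf heq hUbot hUtop hU'bot hU'top hL2,
      mul_div_cancel_right₀ _ hJ.ne']
  rw [hc]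
  exact ⟨fun h => div_pos h hJ, fun h => div_neg_of_neg_of_pos h hJ, fun h => by rw [h, zero_div]⟩

/-- The sign of the traveling wave speed equals the sign of `∫_0^1 f`. -/
theorem traveling_wave_speed_sign
    (U f : ℝ → ℝ) (c : ℝ)
    (hU : ContDiff ℝ 2 U)
    (hf : Continuous f) (hf0 : f 0 = 0) (hf1 : f 1 = 0)
    (heq : ∀ x, -c * deriv U x = (1/2) * deriv (deriv U) x + f (U x))
    (hUbot : Tendsto U atBot (nhds 1))
    (hUtop : Tendsto U atTop (nhds 0))
    (hU'bot : Tendsto (deriv U) atBot (nhds 0))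
    (hU'top : Tendsto (deriv U) atTop (nhds 0))
    (hL2 : Integrable (fun x => (deriv U x) ^ 2))
    (hnz : ∃ x, deriv U x ≠ 0) :
    ((0 < ∫ z in (0:ℝ)..1, f z) → 0 < c) ∧
    ((∫ z in (0:ℝ)..1, f z) < 0 → c < 0) ∧
    ((∫ z in (0:ℝ)..1, f z) = 0 → c = 0) :=
  traveling_wave_speed_sign_general U f c hU hf heq hUbot hUtop hU'bot hU'top hL2 hnz
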